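/- Let A, G be d×d symmetric positive-definite matrices with G ⪰ A, and let G₊ = SR-k(G, A, U) with U ∈ ℝ^{d×k} chosen either (a) with i.i.d. N(0,1) entries, or (b) as the matrix whose columns are the standard basis vectors corresponding to the k largest diagonal entries of G − A. Then E[tr(G₊ − A)] ≤ (1 − k/d)·tr(G − A). -/

import Mathlib

/-!
Write `B = G - A` and `X = B U (UᵀBU)† Uᵀ B`, so that `tr (G₊ - A) = tr B - tr X`. For the
projection `Π = U (UᵀU)⁻¹ Uᵀ` onto the columns of `U`, the Penrose identity
`(UᵀBU) (UᵀBU)† (UᵀBU) = UᵀBU` gives `tr (Π X) = tr (Π B)`, and `tr ((1 - Π) X) ≥ 0` because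
`1 - Π` is an orthogonal projection; hence `tr X ≥ tr (Π B)`.

For greedy `U`, `tr (Π B)` is the sum of the `k` largest diagonal entries of `B`, which is at
least `(k / d) tr B`. For Gaussian `U`, the law of `U` is invariant under sign changes and
permutations of rows, so `E Π` is a multiple of the identity; its trace is `k` because `U` has
full column rank almost surely. Hence `E tr (Π B) = (k / d) tr B`.
-/

open Matrix MeasureTheory ProbabilityTheory

/-- The four Penrose conditions characterizing the Moore–Penrose pseudoinverse. -/
def IsMoorePenrose {m n : Type*} [Fintype m] [Fintype n]
    (S : Matrix m n ℝ) (P : Matrix n m ℝ) : Prop :=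
  S * P * S = S ∧ P * S * P = P ∧ (S * P)ᵀ = S * P ∧ (P * S)ᵀ = P * S

namespace IsMoorePenrose

variable {m n : Type*} [Fintype m] [Fintype n] {S : Matrix m n ℝ} {P Q : Matrix n m ℝ}

theorem unique (hP : IsMoorePenrose S P) (hQ : IsMoorePenrose S Q) : P = Q := by
  obtain ⟨hSPS, hPSP, hSP, hPS⟩ := hP
  obtain ⟨hSQS, hQSQ, hSQ, hQS⟩ := hQ
  have hleft : S * P = S * Q :=
    calc S * P = (S * Q)ᵀ * (S * P)ᵀ := by rw [hSQ, hSP, ← Matrix.mul_assoc, hSQS]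
    _ = (S * P * S * Q)ᵀ := by simp only [Matrix.transpose_mul, Matrix.mul_assoc]
    _ = S * Q := by rw [hSPS, hSQ]
  have hright : P * S = Q * S :=
    calc P * S = (P * S)ᵀ * (Q * S)ᵀ := by
          rw [hPS, hQS, Matrix.mul_assoc P, ← Matrix.mul_assoc S, hSQS]
    _ = (Q * (S * P * S))ᵀ := by simp only [Matrix.transpose_mul, Matrix.mul_assoc]
    _ = Q * S := by rw [hSPS, hQS]
  calc P = P * (S * P) := by rw [← Matrix.mul_assoc, hPSP]
  _ = Q := by rw [hleft, ← Matrix.mul_assoc, hright, hQSQ]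

theorem transpose (h : IsMoorePenrose S P) : IsMoorePenrose Sᵀ Pᵀ := by
  obtain ⟨hSPS, hPSP, hSP, hPS⟩ := h
  refine ⟨?_, ?_, ?_, ?_⟩
  · rw [← Matrix.transpose_mul, ← Matrix.transpose_mul, ← Matrix.mul_assoc, hSPS]
  · rw [← Matrix.transpose_mul, ← Matrix.transpose_mul, ← Matrix.mul_assoc, hPSP]
  · rw [← Matrix.transpose_mul, hPS, hPS]
  · rw [← Matrix.transpose_mul, hSP, hSP]

section Square

variable {n : Type*} [Fintype n] {S P : Matrix n n ℝ}

theorem transpose_eq (hS : Sᵀ = S) (h : IsMoorePenrose S P) : Pᵀ = P :=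
  unique (hS ▸ h.transpose) h

theorem posSemidef (hS : S.PosSemidef) (h : IsMoorePenrose S P) : P.PosSemidef := by
  have hP : Pᵀ = P := h.transpose_eq hS.isHermitian.eq
  simpa [conjTranspose_eq_transpose_of_trivial, hP, h.2.1] using
    hS.conjTranspose_mul_mul_same P

end Square

end IsMoorePenrose

namespace Matrix

section IsSymmIdempotent

variable {m : Type*} [Fintype m] {Q : Matrix m m ℝ}

theorem abs_apply_le_one_of_isSymm_of_isIdempotentElem (hQ : Q.IsSymm)
    (hQQ : IsIdempotentElem Q) (i j : m) : |Q i j| ≤ 1 := by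
  have hdiag : ∀ l, Q l l = ∑ r, Q l r ^ 2 := fun l => by
    conv_lhs => rw [← hQQ.eq]
    simp only [mul_apply, sq]
    exact Finset.sum_congr rfl fun r _ => by rw [hQ.apply l r]
  have hsq_le : ∀ l r, Q l r ^ 2 ≤ Q l l := fun l r => by
    rw [hdiag l]
    exact Finset.single_le_sum (fun r _ => sq_nonneg (Q l r)) (Finset.mem_univ r)
  have hii : Q i i ≤ 1 := by
    nlinarith [hsq_le i i, sq_nonneg (Q i j)]
  rw [← sq_le_one_iff_abs_le_one]
  linarith [hsq_le i j]

theorem trace_mul_nonneg_of_isSymm_of_isIdempotentElem (hQ : Q.IsSymm)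
    (hQQ : IsIdempotentElem Q) {X : Matrix m m ℝ} (hX : X.PosSemidef) : 0 ≤ (Q * X).trace := by
  have hQXQ : (Q * X).trace = (Qᴴ * X * Q).trace := by
    rw [conjTranspose_eq_transpose_of_trivial, hQ.eq, trace_mul_cycle, hQQ.eq]
  rw [hQXQ]
  exact (hX.conjTranspose_mul_mul_same Q).trace_nonneg

end IsSymmIdempotent

variable {m n : Type*} [Fintype m] [Fintype n] [DecidableEq n]

/-- The orthogonal projection onto the column space of `U` when `UᵀU` is invertible, and `0`
otherwise (the junk value of `⁻¹`). -/
noncomputable def colProj (U : Matrix m n ℝ) : Matrix m m ℝ := U * (Uᵀ * U)⁻¹ * Uᵀ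

theorem colProj_of_not_isUnit {U : Matrix m n ℝ} (h : ¬IsUnit (Uᵀ * U).det) :
    colProj U = 0 := by
  rw [colProj, nonsing_inv_apply_not_isUnit _ h, Matrix.mul_zero, Matrix.zero_mul]

theorem isSymm_colProj (U : Matrix m n ℝ) : (colProj U).IsSymm := by
  simp only [IsSymm, colProj, transpose_mul, transpose_nonsing_inv, transpose_transpose,
    Matrix.mul_assoc]

theorem isIdempotentElem_colProj (U : Matrix m n ℝ) : IsIdempotentElem (colProj U) := by
  by_cases h : IsUnit (Uᵀ * U).det
  · have hTT : (Uᵀ * U)⁻¹ * (Uᵀ * U) = 1 := nonsing_inv_mul _ h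
    simp only [IsIdempotentElem, colProj, Matrix.mul_assoc]
    rw [← Matrix.mul_assoc Uᵀ U, ← Matrix.mul_assoc _ (Uᵀ * U), hTT, Matrix.one_mul]
  · simp [IsIdempotentElem, colProj_of_not_isUnit h]

theorem trace_colProj {U : Matrix m n ℝ} (h : IsUnit (Uᵀ * U).det) :
    (colProj U).trace = Fintype.card n := by
  rw [colProj, trace_mul_cycle, mul_nonsing_inv _ h, trace_one]

theorem colProj_of_transpose_mul_self_eq_one {U : Matrix m n ℝ} (h : Uᵀ * U = 1) :
    colProj U = U * Uᵀ := by
  rw [colProj, h, inv_one, Matrix.mul_one]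

theorem colProj_mul_left [DecidableEq m] {U : Matrix m n ℝ} {O : Matrix m m ℝ}
    (hO : Oᵀ * O = 1) :
    colProj (O * U) = O * colProj U * Oᵀ := by
  have hgram : (O * U)ᵀ * (O * U) = Uᵀ * U := by
    rw [transpose_mul, Matrix.mul_assoc, ← Matrix.mul_assoc Oᵀ, hO, Matrix.one_mul]
  rw [colProj, colProj, hgram]
  simp only [transpose_mul, Matrix.mul_assoc]

theorem trace_colProj_mul_le_of_isMoorePenrose [DecidableEq m] {B : Matrix m m ℝ}
    (hB : B.PosSemidef) {U : Matrix m n ℝ} {P : Matrix n n ℝ}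
    (hP : IsMoorePenrose (Uᵀ * B * U) P) :
    (colProj U * B).trace ≤ (B * U * P * Uᵀ * B).trace := by
  have hBt : Bᵀ = B := hB.isHermitian.eq
  set X := B * U * P * Uᵀ * B with hXdef
  have hX : X.PosSemidef := by
    have hPpsd : P.PosSemidef := hP.posSemidef (by
      simpa [conjTranspose_eq_transpose_of_trivial] using hB.conjTranspose_mul_mul_same U)
    simpa [conjTranspose_eq_transpose_of_trivial, hBt, hXdef, Matrix.mul_assoc] using
      hPpsd.conjTranspose_mul_mul_same (Uᵀ * B)
  -- `UᵀBU P UᵀBU = UᵀBU` makes `colProj U` act on `X` as it acts on `B`.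
  have hproj : (colProj U * X).trace = (colProj U * B).trace :=
    calc (colProj U * X).trace = (U * ((Uᵀ * U)⁻¹ * Uᵀ * X)).trace := by
          simp only [colProj, Matrix.mul_assoc]
    _ = ((Uᵀ * U)⁻¹ * (Uᵀ * B * U * P * (Uᵀ * B * U))).trace := by
          rw [trace_mul_comm]; simp only [hXdef, Matrix.mul_assoc]
    _ = ((Uᵀ * U)⁻¹ * Uᵀ * B * U).trace := by rw [hP.1]; simp only [Matrix.mul_assoc]
    _ = (colProj U * B).trace := by rw [trace_mul_comm]; simp only [colProj, Matrix.mul_assoc]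
  have hcompl : 0 ≤ ((1 - colProj U) * X).trace :=
    trace_mul_nonneg_of_isSymm_of_isIdempotentElem (isSymm_one.sub (isSymm_colProj U))
      (isIdempotentElem_colProj U).one_sub hX
  rw [Matrix.sub_mul, Matrix.one_mul, trace_sub, hproj] at hcompl
  linarith

theorem measurable_colProj_apply {ι κ : Type*} [Fintype ι] [Fintype κ] [DecidableEq κ]
    (i j : ι) : Measurable fun V : ι → κ → ℝ => colProj (of V) i j := by
  have hof : Continuous fun V : ι → κ → ℝ => of V := continuous_id
  have hgram : Continuous fun V : ι → κ → ℝ => (of V)ᵀ * of V :=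
    hof.matrix_transpose.matrix_mul hof
  have hadj :
      Continuous fun V : ι → κ → ℝ => (of V * ((of V)ᵀ * of V).adjugate * (of V)ᵀ) i j :=
    ((hof.matrix_mul hgram.matrix_adjugate).matrix_mul hof.matrix_transpose).matrix_elem i j
  simp only [colProj, inv_def, Matrix.mul_smul, Matrix.smul_mul, smul_apply, smul_eq_mul,
    Ring.inverse_eq_inv']
  exact (measurable_inv.comp hgram.matrix_det.measurable).mul hadj.measurable

theorem isUnit_det_transpose_mul_self_iff {m n K : Type*} [Fintype m] [Fintype n]
    [DecidableEq n] [Field K] [LinearOrder K] [IsStrictOrderedRing K] (U : Matrix m n K) :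
    IsUnit (Uᵀ * U).det ↔ LinearIndependent K U.col := by
  rw [← isUnit_iff_isUnit_det, ← mulVec_injective_iff_isUnit, ← mulVec_injective_iff,
    ← coe_mulVecLin, ← coe_mulVecLin, ← LinearMap.ker_eq_bot, ← LinearMap.ker_eq_bot,
    ker_mulVecLin_transpose_mul_self]

end Matrix

theorem Finset.card_mul_sum_le_card_mul_sum_of_le {ι : Type*} [Fintype ι] [DecidableEq ι]
    (s : Finset ι) (a : ι → ℝ) (h : ∀ i ∈ s, ∀ j ∉ s, a j ≤ a i) :
    (s.card : ℝ) * ∑ i, a i ≤ Fintype.card ι * ∑ i ∈ s, a i := by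
  have hout : (s.card : ℝ) * ∑ j ∈ sᶜ, a j ≤ sᶜ.card * ∑ i ∈ s, a i :=
    calc (s.card : ℝ) * ∑ j ∈ sᶜ, a j = ∑ j ∈ sᶜ, ∑ _i ∈ s, a j := by
          rw [Finset.mul_sum]; simp
    _ ≤ ∑ _j ∈ sᶜ, ∑ i ∈ s, a i :=
          Finset.sum_le_sum fun j hj => Finset.sum_le_sum fun i hi =>
            h i hi j (Finset.mem_compl.1 hj)
    _ = sᶜ.card * ∑ i ∈ s, a i := by simp
  have hcard : (Fintype.card ι : ℝ) = s.card + sᶜ.card := by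
    rw [Finset.card_compl]; push_cast [Finset.card_le_univ]; ring
  rw [← Finset.sum_add_sum_compl s a, hcard]
  linarith

namespace Matrix

variable {ι κ : Type*} [Fintype ι] [DecidableEq ι] {e : κ → ι} {U : Matrix ι κ ℝ}

theorem transpose_mul_self_of_eq_selection [DecidableEq κ] (he : Function.Injective e)
    (hU : U = of fun j i => if e i = j then (1 : ℝ) else 0) : Uᵀ * U = 1 := by
  ext i i'
  simp [hU, mul_apply, one_apply, he.eq_iff, eq_comm]

theorem trace_mul_transpose_mul_of_eq_selection [Fintype κ]
    (hU : U = of fun j i => if e i = j then (1 : ℝ) else 0) (B : Matrix ι ι ℝ) :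
    (U * Uᵀ * B).trace = ∑ i, B (e i) (e i) := by
  rw [Matrix.mul_assoc, trace_mul_comm]
  simp [hU, trace, mul_apply]

theorem trace_sub_le_of_isMoorePenrose_of_eq_selection [Fintype κ] [DecidableEq κ]
    {B : Matrix ι ι ℝ} (hB : B.PosSemidef) (he : Function.Injective e)
    (hmax : ∀ i j, (∀ i', e i' ≠ j) → B j j ≤ B (e i) (e i))
    (hU : U = of fun j i => if e i = j then (1 : ℝ) else 0) {P : Matrix κ κ ℝ}
    (hP : IsMoorePenrose (Uᵀ * B * U) P) :
    B.trace - (B * U * P * Uᵀ * B).trace ≤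
      (1 - (Fintype.card κ : ℝ) / Fintype.card ι) * B.trace := by
  have hproj := trace_colProj_mul_le_of_isMoorePenrose hB hP
  rw [colProj_of_transpose_mul_self_eq_one (transpose_mul_self_of_eq_selection he hU),
    trace_mul_transpose_mul_of_eq_selection hU] at hproj
  have htop := Finset.card_mul_sum_le_card_mul_sum_of_le (Finset.univ.image e) (fun j => B j j)
    (by simpa using hmax)
  rw [Finset.card_image_of_injective _ he, Finset.sum_image fun i _ i' _ h => he h,
    Finset.card_univ] at htop
  suffices (Fintype.card κ : ℝ) / Fintype.card ι * B.trace ≤ ∑ i, B (e i) (e i) by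
    linarith
  rcases (Fintype.card ι).eq_zero_or_pos with hι | hι
  · simp [hι, Finset.sum_nonneg fun i _ => hB.diag_nonneg (i := e i)]
  · rw [div_mul_eq_mul_div, div_le_iff₀ (by exact_mod_cast hι)]
    simpa [trace, mul_comm] using htop

end Matrix

theorem MeasureTheory.Measure.AbsolutelyContinuous.pi_fin {α : Type*} [MeasurableSpace α] :
    ∀ {n : ℕ} {μ ν : Fin n → Measure α} [∀ i, SigmaFinite (μ i)] [∀ i, SigmaFinite (ν i)],
      (∀ i, μ i ≪ ν i) → Measure.pi μ ≪ Measure.pi ν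
  | 0, μ, ν, _, _, _ => by rw [Measure.pi_of_empty μ, Measure.pi_of_empty ν]
  | n + 1, μ, ν, _, _, h => by
    rw [← (measurePreserving_piFinSuccAbove μ 0).symm.map_eq,
      ← (measurePreserving_piFinSuccAbove ν 0).symm.map_eq]
    exact ((h 0).prod (pi_fin fun i => h _)).map (MeasurableEquiv.measurable _)

theorem ae_linearIndependent_fin_cons {E : Type*} [NormedAddCommGroup E] [NormedSpace ℝ E]
    [FiniteDimensional ℝ E] [MeasurableSpace E] [BorelSpace E] (μ : Measure E)
    [μ.IsAddHaarMeasure] {ν : Measure E} [SFinite ν] (hν : ν ≪ μ)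
    {X : Type*} [MeasurableSpace X] {ρ : Measure X} [SFinite ρ] {k : ℕ}
    (hk : k < Module.finrank ℝ E) {w : X → Fin k → E} (hw : Measurable w)
    (h : ∀ᵐ x ∂ρ, LinearIndependent ℝ (w x)) :
    ∀ᵐ p ∂ν.prod ρ, LinearIndependent ℝ (Fin.cons p.1 (w p.2) : Fin (k + 1) → E) := by
  have hmeas : MeasurableSet
      {p : E × X | LinearIndependent ℝ (Fin.cons p.1 (w p.2) : Fin (k + 1) → E)} := by
    refine isOpen_setOfPred_linearIndependent.measurableSet.preimage
      (measurable_pi_lambda _ fun i => ?_)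
    refine Fin.cases ?_ (fun j => ?_) i
    · exact measurable_fst
    · exact (measurable_pi_apply j).comp (hw.comp measurable_snd)
  rw [Measure.ae_prod_iff_ae_ae hmeas, Measure.ae_ae_comm hmeas]
  filter_upwards [h] with x hx
  have hspan : Submodule.span ℝ (Set.range (w x)) ≠ ⊤ := by
    intro htop
    have := finrank_range_le_card (R := ℝ) (w x)
    rw [Set.finrank, htop, finrank_top, Fintype.card_fin] at this
    omega
  refine measure_mono_null (fun y hy => ?_) (hν (Measure.addHaar_submodule μ _ hspan))
  simp_all [linearIndependent_finCons]

theorem MeasureTheory.MeasurePreserving.integral_comp_of_aestronglyMeasurable {α β : Type*}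
    [MeasurableSpace α] [MeasurableSpace β] {μ : Measure α} {ν : Measure β} {f : α → β}
    (hf : MeasurePreserving f μ ν) {g : β → ℝ} (hg : AEStronglyMeasurable g ν) :
    ∫ x, g (f x) ∂μ = ∫ y, g y ∂ν := by
  rw [← hf.map_eq] at hg ⊢
  exact (integral_map hf.aemeasurable hg).symm

noncomputable def gaussianMatrix (d k : ℕ) : Measure (Fin d → Fin k → ℝ) :=
  Measure.pi fun _ => Measure.pi fun _ => gaussianReal 0 1

section gaussianMatrix

variable {d k : ℕ}

instance : IsProbabilityMeasure (gaussianMatrix d k) := by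
  unfold gaussianMatrix; infer_instance

theorem measurePreserving_gaussianMatrix_splitFirstCol :
    MeasurePreserving (fun V : Fin d → Fin (k + 1) → ℝ => (fun i => V i 0, fun i j => V i j.succ))
      (gaussianMatrix d (k + 1))
      ((Measure.pi fun _ : Fin d => gaussianReal 0 1).prod (gaussianMatrix d k)) :=
  (measurePreserving_arrowProdEquivProdArrow ℝ (Fin k → ℝ) (Fin d) (fun _ => gaussianReal 0 1)
      (fun _ => Measure.pi fun _ => gaussianReal 0 1)).comp
    (measurePreserving_pi _ _ fun _ =>
      measurePreserving_piFinSuccAbove (fun _ : Fin (k + 1) => gaussianReal 0 1) 0)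

theorem ae_linearIndependent_col_gaussianMatrix :
    ∀ {k : ℕ}, k ≤ d → ∀ᵐ V ∂gaussianMatrix d k, LinearIndependent ℝ (of V).col
  | 0, _ => ae_of_all _ fun _ => linearIndependent_empty_type
  | k + 1, hk => by
    have hγ : (Measure.pi fun _ : Fin d => gaussianReal 0 1) ≪ volume :=
      Measure.AbsolutelyContinuous.pi_fin fun _ => gaussianReal_absolutelyContinuous 0 one_ne_zero
    have hcons := ae_linearIndependent_fin_cons volume hγ (by simpa using hk)
      (measurable_pi_lambda _ fun j => measurable_pi_lambda _ fun i =>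
        (measurable_pi_apply j).comp (measurable_pi_apply i))
      (ae_linearIndependent_col_gaussianMatrix (k := k) (by omega))
    filter_upwards [measurePreserving_gaussianMatrix_splitFirstCol.quasiMeasurePreserving.ae hcons]
      with V hV
    have hcol : (of V).col = Fin.cons (fun i => V i 0) (of fun i j => V i j.succ).col := by
      funext a
      cases a using Fin.cases <;> rfl
    rw [hcol]
    exact hV

theorem ae_isUnit_det_gaussianMatrix (hk : k ≤ d) :
    ∀ᵐ V ∂gaussianMatrix d k, IsUnit ((of V)ᵀ * of V).det := by
  filter_upwards [ae_linearIndependent_col_gaussianMatrix hk] with V hV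
  exact (isUnit_det_transpose_mul_self_iff _).2 hV

theorem measurePreserving_gaussianMatrix_mul_rows {s : Fin d → ℝ} (hs : ∀ r, s r * s r = 1) :
    MeasurePreserving (fun (V : Fin d → Fin k → ℝ) r c => s r * V r c)
      (gaussianMatrix d k) (gaussianMatrix d k) := by
  refine measurePreserving_pi _ _ fun r => measurePreserving_pi _ _ fun _ =>
    ⟨measurable_const_mul _, ?_⟩
  rw [gaussianReal_map_const_mul, mul_zero]
  congr
  ext
  simp [sq, hs r]

theorem measurePreserving_gaussianMatrix_comp_rows (σ : Equiv.Perm (Fin d)) :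
    MeasurePreserving (fun (V : Fin d → Fin k → ℝ) r => V (σ r))
      (gaussianMatrix d k) (gaussianMatrix d k) := by
  unfold gaussianMatrix
  convert (measurePreserving_arrowCongr' (fun _ => Measure.pi fun _ : Fin k => gaussianReal 0 1)
    (fun _ => Measure.pi fun _ : Fin k => gaussianReal 0 1) σ.symm (MeasurableEquiv.refl _)
    fun _ => MeasurePreserving.id _) using 1
  funext V r
  simp [MeasurableEquiv.arrowCongr', Equiv.arrowCongr']

theorem integrable_colProj_apply (i j : Fin d) :
    Integrable (fun V => colProj (of V) i j) (gaussianMatrix d k) :=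
  .of_bound (Matrix.measurable_colProj_apply i j).aestronglyMeasurable 1
    (ae_of_all _ fun _ => abs_apply_le_one_of_isSymm_of_isIdempotentElem (isSymm_colProj _)
      (isIdempotentElem_colProj _) i j)

theorem integral_colProj_apply_of_ne {i j : Fin d} (hij : i ≠ j) :
    ∫ V, colProj (of V) i j ∂gaussianMatrix d k = 0 := by
  -- flipping the sign of row `i` preserves the law and negates the `(i, j)` entry
  set s : Fin d → ℝ := fun r => if r = i then -1 else 1
  have hs : ∀ r, s r * s r = 1 := fun r => by by_cases h : r = i <;> simp [s, h]
  have hflip (V : Fin d → Fin k → ℝ) :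
      colProj (of fun r c => s r * V r c) i j = -colProj (of V) i j := by
    have hO : (diagonal s)ᵀ * diagonal s = 1 := by
      rw [diagonal_transpose, diagonal_mul_diagonal, funext hs, diagonal_one]
    have hV : (of fun r c => s r * V r c) = diagonal s * of V := by ext; simp [diagonal_mul]
    rw [hV, colProj_mul_left hO, diagonal_transpose, mul_diagonal, diagonal_mul]
    simp [s, Ne.symm hij]
  have := (measurePreserving_gaussianMatrix_mul_rows (k := k) hs)
    |>.integral_comp_of_aestronglyMeasurable (measurable_colProj_apply i j).aestronglyMeasurable
  simp only [hflip, integral_neg] at this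
  linarith

theorem integral_colProj_apply_self_eq (i i' : Fin d) :
    ∫ V, colProj (of V) i i ∂gaussianMatrix d k =
      ∫ V, colProj (of V) i' i' ∂gaussianMatrix d k := by
  set σ := Equiv.swap i i'
  have hswap (V : Fin d → Fin k → ℝ) :
      colProj (of fun r => V (σ r)) i i = colProj (of V) i' i' := by
    have hO : (σ.permMatrix ℝ)ᵀ * σ.permMatrix ℝ = 1 := by
      rw [transpose_permMatrix, ← permMatrix_mul, mul_inv_cancel, permMatrix_one]
    have hV : (of fun r => V (σ r)) = σ.permMatrix ℝ * of V := by
      rw [Equiv.Perm.permMatrix, PEquiv.toMatrix_toPEquiv_mul]; rfl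
    rw [hV, colProj_mul_left hO, transpose_permMatrix, Equiv.Perm.permMatrix,
      Equiv.Perm.permMatrix, PEquiv.toMatrix_toPEquiv_mul, PEquiv.mul_toMatrix_toPEquiv]
    simp [σ]
  have := (measurePreserving_gaussianMatrix_comp_rows (k := k) σ)
    |>.integral_comp_of_aestronglyMeasurable (measurable_colProj_apply i i).aestronglyMeasurable
  simp only [hswap] at this
  exact this.symm

theorem integral_colProj_apply_self (hk : k ≤ d) (i : Fin d) :
    ∫ V, colProj (of V) i i ∂gaussianMatrix d k = k / d := by
  have htrace : ∑ a, ∫ V, colProj (of V) a a ∂gaussianMatrix d k = k := by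
    have hae : ∀ᵐ V ∂gaussianMatrix d k, ∑ a, colProj (of V) a a = k :=
      (ae_isUnit_det_gaussianMatrix hk).mono fun V hV => by simpa [trace] using trace_colProj hV
    rw [← integral_finsetSum _ fun a _ => integrable_colProj_apply a a, integral_congr_ae hae]
    simp
  simp only [integral_colProj_apply_self_eq _ i, Finset.sum_const, Finset.card_univ,
    Fintype.card_fin, nsmul_eq_mul] at htrace
  have hd : (d : ℝ) ≠ 0 := by exact_mod_cast (Fin.pos i).ne'
  field_simp
  linarith

theorem integrable_trace_colProj_mul (B : Matrix (Fin d) (Fin d) ℝ) :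
    Integrable (fun V => (colProj (of V) * B).trace) (gaussianMatrix d k) := by
  simp only [trace, diag, mul_apply]
  exact integrable_finsetSum _ fun a _ => integrable_finsetSum _ fun b _ =>
    (integrable_colProj_apply a b).mul_const _

theorem integral_trace_colProj_mul (hk : k ≤ d) (B : Matrix (Fin d) (Fin d) ℝ) :
    ∫ V, (colProj (of V) * B).trace ∂gaussianMatrix d k = k / d * B.trace := by
  have hint (a b : Fin d) :
      Integrable (fun V => colProj (of V) a b * B b a) (gaussianMatrix d k) :=
    (integrable_colProj_apply a b).mul_const _
  simp only [trace, diag, mul_apply]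
  rw [integral_finsetSum _ fun a _ => integrable_finsetSum _ fun b _ => hint a b,
    Finset.mul_sum]
  refine Finset.sum_congr rfl fun a _ => ?_
  rw [integral_finsetSum _ fun b _ => hint a b, Finset.sum_eq_single a]
  · rw [integral_mul_const, integral_colProj_apply_self hk]
  · intro b _ hba
    rw [integral_mul_const, integral_colProj_apply_of_ne (Ne.symm hba), zero_mul]
  · simp

end gaussianMatrix

theorem integral_trace_sub_le_of_map_eq_gaussianMatrix {d k : ℕ} (hk : k ≤ d)
    {B : Matrix (Fin d) (Fin d) ℝ} (hB : B.PosSemidef)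
    {Ω : Type*} [MeasurableSpace Ω] {μ : Measure Ω} [IsProbabilityMeasure μ]
    {U : Ω → Matrix (Fin d) (Fin k) ℝ}
    (hU : μ.map (fun ω => fun i j => U ω i j) = gaussianMatrix d k)
    {P : Ω → Matrix (Fin k) (Fin k) ℝ} (hP : ∀ ω, IsMoorePenrose ((U ω)ᵀ * B * U ω) (P ω)) :
    ∫ ω, (B.trace - (B * U ω * P ω * (U ω)ᵀ * B).trace) ∂μ ≤ (1 - (k : ℝ) / d) * B.trace := by
  set F : Ω → Fin d → Fin k → ℝ := fun ω i j => U ω i j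
  have hF : AEMeasurable F μ := by
    by_contra h
    rw [Measure.map_of_not_aemeasurable h] at hU
    exact IsProbabilityMeasure.ne_zero _ hU.symm
  have hproj := integrable_trace_colProj_mul (k := k) B
  rw [← hU] at hproj
  have hprojF : Integrable (fun ω => (colProj (U ω) * B).trace) μ :=
    (integrable_map_measure hproj.aestronglyMeasurable hF).1 hproj
  -- `P` need not be measurable; a non-integrable integrand has integral `0`.
  by_cases hint : Integrable (fun ω => B.trace - (B * U ω * P ω * (U ω)ᵀ * B).trace) μ
  · calc ∫ ω, (B.trace - (B * U ω * P ω * (U ω)ᵀ * B).trace) ∂μ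
        ≤ ∫ ω, (B.trace - (colProj (U ω) * B).trace) ∂μ :=
          integral_mono hint ((integrable_const _).sub hprojF) fun ω => by
            linarith [trace_colProj_mul_le_of_isMoorePenrose hB (hP ω)]
      _ = B.trace - ∫ V, (colProj (of V) * B).trace ∂gaussianMatrix d k := by
          rw [integral_sub (integrable_const _) hprojF, integral_const, probReal_univ, one_smul,
            ← hU, integral_map hF hproj.aestronglyMeasurable]
          rfl
      _ = (1 - (k : ℝ) / d) * B.trace := by rw [integral_trace_colProj_mul hk]; ring
  · rw [integral_undef hint]
    have hkd : (k : ℝ) / d ≤ 1 := div_le_one_of_le₀ (by exact_mod_cast hk) (Nat.cast_nonneg _)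
    exact mul_nonneg (sub_nonneg.2 hkd) hB.trace_nonneg

theorem srk_update_trace_decrease_general {d k : ℕ} (hk : k ≤ d)
    (A G : Matrix (Fin d) (Fin d) ℝ)
    (hGA : (G - A).PosSemidef)
    {Ω : Type*} [MeasureSpace Ω] [IsProbabilityMeasure (ℙ : Measure Ω)]
    -- (a) randomized strategy
    (U : Ω → Matrix (Fin d) (Fin k) ℝ)
    (hU : Measure.map (fun ω => fun i j => U ω i j) ℙ =
      Measure.pi fun _ : Fin d => Measure.pi fun _ : Fin k => gaussianReal 0 1)
    (P : Ω → Matrix (Fin k) (Fin k) ℝ)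
    (hP : ∀ ω, IsMoorePenrose ((U ω)ᵀ * (G - A) * U ω) (P ω))
    -- (b) greedy strategy: columns are basis vectors of the k largest diagonal
    -- entries of G − A
    (e : Fin k → Fin d) (he : Function.Injective e)
    (hmax : ∀ i : Fin k, ∀ j : Fin d, (∀ i' : Fin k, e i' ≠ j) →
      (G - A) j j ≤ (G - A) (e i) (e i))
    (Ug : Matrix (Fin d) (Fin k) ℝ)
    (hUg : Ug = Matrix.of fun j i => if e i = j then (1 : ℝ) else 0)
    (Pg : Matrix (Fin k) (Fin k) ℝ)
    (hPg : IsMoorePenrose (Ugᵀ * (G - A) * Ug) Pg) :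
    ((∫ ω, ((G - (G - A) * U ω * P ω * (U ω)ᵀ * (G - A)) - A).trace ∂ℙ) ≤
        (1 - (k : ℝ) / d) * (G - A).trace) ∧
      (((G - (G - A) * Ug * Pg * Ugᵀ * (G - A)) - A).trace ≤
        (1 - (k : ℝ) / d) * (G - A).trace) := by
  have htrace : ∀ X : Matrix (Fin d) (Fin d) ℝ, ((G - X) - A).trace = (G - A).trace - X.trace :=
    fun X => by rw [sub_right_comm, trace_sub]
  simp only [htrace]
  exact ⟨integral_trace_sub_le_of_map_eq_gaussianMatrix hk hGA hU hP,
    by simpa using trace_sub_le_of_isMoorePenrose_of_eq_selection hGA he hmax hUg hPg⟩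

/-- **Theorem 3.6**: the SR-k update `G₊ = G − (G−A)U(Uᵀ(G−A)U)†Uᵀ(G−A)` with
(a) random Gaussian directions or (b) greedy directions satisfies
`E[tr(G₊ − A)] ≤ (1 − k/d)·tr(G − A)`. -/
theorem srk_update_trace_decrease {d k : ℕ} (hd : 0 < d) (hk : k ≤ d)
    (A G : Matrix (Fin d) (Fin d) ℝ) (hA : A.PosDef) (hG : G.PosDef)
    (hGA : (G - A).PosSemidef)
    {Ω : Type*} [MeasureSpace Ω] [IsProbabilityMeasure (ℙ : Measure Ω)]
    -- (a) randomized strategy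
    (U : Ω → Matrix (Fin d) (Fin k) ℝ)
    (hU : Measure.map (fun ω => fun i j => U ω i j) ℙ =
      Measure.pi fun _ : Fin d => Measure.pi fun _ : Fin k => gaussianReal 0 1)
    (P : Ω → Matrix (Fin k) (Fin k) ℝ)
    (hP : ∀ ω, IsMoorePenrose ((U ω)ᵀ * (G - A) * U ω) (P ω))
    -- (b) greedy strategy: columns are basis vectors of the k largest diagonal
    -- entries of G − A
    (e : Fin k → Fin d) (he : Function.Injective e)
    (hmax : ∀ i : Fin k, ∀ j : Fin d, (∀ i' : Fin k, e i' ≠ j) →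
      (G - A) j j ≤ (G - A) (e i) (e i))
    (Ug : Matrix (Fin d) (Fin k) ℝ)
    (hUg : Ug = Matrix.of fun j i => if e i = j then (1 : ℝ) else 0)
    (Pg : Matrix (Fin k) (Fin k) ℝ)
    (hPg : IsMoorePenrose (Ugᵀ * (G - A) * Ug) Pg) :
    ((∫ ω, ((G - (G - A) * U ω * P ω * (U ω)ᵀ * (G - A)) - A).trace ∂ℙ) ≤
        (1 - (k : ℝ) / d) * (G - A).trace) ∧
      (((G - (G - A) * Ug * Pg * Ugᵀ * (G - A)) - A).trace ≤
        (1 - (k : ℝ) / d) * (G - A).trace) :=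
  srk_update_trace_decrease_general hk A G hGA U hU P hP e he hmax Ug hUg Pg hPg
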